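/- arXiv:1907.07716 — 3 statements merged into one kernel-verified Lean document; each statement's English description precedes it below -/
import Mathlib

section
/- Let G be a finite group, f ∈ Aut(G), and H a subgroup of G with H ≤ Fix(f) = {g ∈ G : f(g) = g}. If G is generated by the set {g·f(g)⁻¹ : g ∈ G}, then the order of f in Aut(G) equals the order of the induced permutation f_H of the left coset space G/H given by f_H(gH) = f(g)H. -/
/-!  Basic theory of quandles: structures, subquandles, congruences,
quotients, displacement groups, affine and principal quandles. -/

universe u v

/-- A quandle structure on a set `Q`: a binary operation whose left
translations are bijective, which is left self-distributive and idempotent. -/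
structure QuandleStruct (Q : Type*) where
  act : Q → Q → Q
  act_bijective : ∀ a, Function.Bijective (act a)
  self_distrib : ∀ a b c, act a (act b c) = act (act a b) (act a c)
  act_idem : ∀ a, act a a = a

namespace QuandleStruct

variable {Q : Type*} {R : Type*}

/-- The left translation `L_a` as a permutation of `Q`. -/
noncomputable def L (S : QuandleStruct Q) (a : Q) : Equiv.Perm Q :=
  Equiv.ofBijective (S.act a) (S.act_bijective a)

@[simp] lemma L_apply (S : QuandleStruct Q) (a b : Q) : S.L a b = S.act a b := rfl

/-- Left division `a \ b`. -/
noncomputable def ldiv (S : QuandleStruct Q) (a b : Q) : Q := (S.L a).symm b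

@[simp] lemma ldiv_act (S : QuandleStruct Q) (a b : Q) : S.ldiv a (S.act a b) = b :=
  (S.L a).symm_apply_apply b

@[simp] lemma act_ldiv (S : QuandleStruct Q) (a b : Q) : S.act a (S.ldiv a b) = b :=
  (S.L a).apply_symm_apply b

/-- The displacement group `Dis(Q)`, generated by all `L_a ∘ L_b⁻¹`. -/
def Dis (S : QuandleStruct Q) : Subgroup (Equiv.Perm Q) :=
  Subgroup.closure {g | ∃ a b, g = S.L a * (S.L b)⁻¹}

/-- A quandle is connected if its displacement group acts transitively. -/
def Connected (S : QuandleStruct Q) : Prop := ∀ x y : Q, ∃ g ∈ S.Dis, g x = y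

/-- A quandle is faithful if `a ↦ L_a` is injective. -/
def Faithful (S : QuandleStruct Q) : Prop := Function.Injective S.L

/-- A quandle is latin if all right translations are bijective. -/
def Latin (S : QuandleStruct Q) : Prop := ∀ a : Q, Function.Bijective (fun b => S.act b a)

/-- A subquandle: a nonempty subset closed under the operation and left division. -/
def IsSubquandle (S : QuandleStruct Q) (s : Set Q) : Prop :=
  s.Nonempty ∧ ∀ a ∈ s, ∀ b ∈ s, S.act a b ∈ s ∧ S.ldiv a b ∈ s

/-- The quandle structure induced on a subquandle. -/
def restrict (S : QuandleStruct Q) (s : Set Q) (hs : S.IsSubquandle s) :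
    QuandleStruct s where
  act a b := ⟨S.act a.1 b.1, (hs.2 a.1 a.2 b.1 b.2).1⟩
  act_bijective a := by
    constructor
    · intro x y h
      exact Subtype.ext ((S.act_bijective a.1).1 (congrArg Subtype.val h))
    · intro b
      refine ⟨⟨S.ldiv a.1 b.1, (hs.2 a.1 a.2 b.1 b.2).2⟩, Subtype.ext ?_⟩
      exact S.act_ldiv a.1 b.1
  self_distrib a b c := Subtype.ext (S.self_distrib a.1 b.1 c.1)
  act_idem a := Subtype.ext (S.act_idem a.1)

/-- A quandle (with more than one element) is strictly simple if it has no
proper subquandle. -/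
def StrictlySimple (S : QuandleStruct Q) : Prop :=
  Nontrivial Q ∧ ∀ s : Set Q, S.IsSubquandle s → s.Nontrivial → s = Set.univ

/-- A quandle is locally strictly simple (LSS) if every proper subquandle is
strictly simple. -/
def LSS (S : QuandleStruct Q) : Prop :=
  ∀ (s : Set Q) (hs : S.IsSubquandle s), s.Nontrivial → s ≠ Set.univ →
    StrictlySimple (S.restrict s hs)

/-- A congruence of a quandle: an equivalence relation compatible with the
operation and with left division. -/
structure IsCongruence (S : QuandleStruct Q) (r : Q → Q → Prop) : Prop where
  equiv : Equivalence r
  act_comp : ∀ {a b c d}, r a b → r c d → r (S.act a c) (S.act b d)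
  ldiv_comp : ∀ {a b c d}, r a b → r c d → r (S.ldiv a c) (S.ldiv b d)

/-- The setoid attached to a congruence. -/
def IsCongruence.setoid {S : QuandleStruct Q} {r : Q → Q → Prop}
    (hr : S.IsCongruence r) : Setoid Q := ⟨r, hr.equiv⟩

/-- The quotient quandle `Q/α`. -/
def quot (S : QuandleStruct Q) {r : Q → Q → Prop} (hr : S.IsCongruence r) :
    QuandleStruct (Quotient hr.setoid) where
  act := Quotient.map₂ S.act fun _ _ h1 _ _ h2 => hr.act_comp h1 h2
  act_bijective := by
    intro a
    induction a using Quotient.ind with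
    | _ a =>
    constructor
    · intro x y
      induction x using Quotient.ind with
      | _ x =>
      induction y using Quotient.ind with
      | _ y =>
      intro h
      have h1 : r (S.act a x) (S.act a y) := Quotient.exact h
      have h2 := hr.ldiv_comp (hr.equiv.refl a) h1
      rw [S.ldiv_act, S.ldiv_act] at h2
      exact Quotient.sound h2
    · intro b
      induction b using Quotient.ind with
      | _ b =>
      exact ⟨Quotient.mk _ (S.ldiv a b), congrArg (Quotient.mk _) (S.act_ldiv a b)⟩
  self_distrib := by
    intro a b c
    induction a using Quotient.ind with
    | _ a =>
    induction b using Quotient.ind with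
    | _ b =>
    induction c using Quotient.ind with
    | _ c =>
    exact congrArg (Quotient.mk _) (S.self_distrib a b c)
  act_idem := by
    intro a
    induction a using Quotient.ind with
    | _ a =>
    exact congrArg (Quotient.mk _) (S.act_idem a)

/-- The congruence block `[a]_α` is a subquandle. -/
lemma block_isSubquandle (S : QuandleStruct Q) {r : Q → Q → Prop}
    (hr : S.IsCongruence r) (a : Q) : S.IsSubquandle {b | r a b} := by
  refine ⟨⟨a, hr.equiv.refl a⟩, fun x hx y hy => ⟨?_, ?_⟩⟩
  · have h := hr.act_comp hx hy
    rwa [S.act_idem] at h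
  · have h := hr.ldiv_comp hx hy
    have ha : S.ldiv a a = a := by
      have h2 := S.ldiv_act a a
      rwa [S.act_idem] at h2
    rwa [ha] at h

/-- A quandle is simple if its only congruences are `0_Q` (equality) and
`1_Q` (the full relation). -/
def Simple (S : QuandleStruct Q) : Prop :=
  ∀ r : Q → Q → Prop, S.IsCongruence r →
    r = (fun a b : Q => a = b) ∨ r = (fun _ _ : Q => True)

/-- A quandle is subdirectly irreducible if the intersection of all congruences
different from `0_Q` is different from `0_Q`. -/
def SubdirectlyIrreducible (S : QuandleStruct Q) : Prop :=
  ∃ a b : Q, a ≠ b ∧ ∀ r : Q → Q → Prop, S.IsCongruence r →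
    r ≠ (fun a b : Q => a = b) → r a b

/-- Isomorphism of quandles. -/
def QIso (S : QuandleStruct Q) (T : QuandleStruct R) : Prop :=
  ∃ e : Q ≃ R, ∀ a b, e (S.act a b) = T.act (e a) (e b)

/-- The relation `σ_Q` : two elements are related iff their point stabilizers
in the displacement group coincide. -/
def sigmaRel (S : QuandleStruct Q) (a b : Q) : Prop :=
  ∀ g ∈ S.Dis, (g a = a ↔ g b = b)

/-- The displacement group relative to a relation `r`. -/
def DisRel (S : QuandleStruct Q) (r : Q → Q → Prop) : Subgroup (Equiv.Perm Q) :=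
  Subgroup.closure {g | ∃ a b, r a b ∧ g = S.L a * (S.L b)⁻¹}

/-- The direct product of two quandles. -/
def prod (S : QuandleStruct Q) (T : QuandleStruct R) : QuandleStruct (Q × R) where
  act a b := (S.act a.1 b.1, T.act a.2 b.2)
  act_bijective a := by
    show Function.Bijective (Prod.map (S.act a.1) (T.act a.2))
    exact (S.act_bijective a.1).prodMap (T.act_bijective a.2)
  self_distrib a b c := Prod.ext (S.self_distrib a.1 b.1 c.1) (T.self_distrib a.2 b.2 c.2)
  act_idem a := Prod.ext (S.act_idem a.1) (T.act_idem a.2)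

end QuandleStruct

/-- The affine quandle `Aff(A, f)` over an abelian group `A` with
`a * b = (1 - f)(a) + f(b)`. -/
def affineQuandle (A : Type*) [AddCommGroup A] (f : A ≃+ A) : QuandleStruct A where
  act a b := a - f a + f b
  act_bijective a := by
    show Function.Bijective ((fun x : A => a - f a + x) ∘ f)
    exact (Equiv.addLeft (a - f a)).bijective.comp f.bijective
  self_distrib a b c := by
    simp only [map_add, map_sub]
    abel
  act_idem a := by simp

/-- Data for an affine quandle: a finite abelian group together with an
automorphism. -/
structure AffineData : Type 1 where
  carrier : Type
  [grp : AddCommGroup carrier]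
  [fin : Finite carrier]
  equivAdd : carrier ≃+ carrier

attribute [instance] AffineData.grp AffineData.fin

namespace QuandleStruct

/-- A quandle is affine if it is isomorphic to `Aff(A, f)` for some finite
abelian group `A` and automorphism `f`. -/
def IsAffine {Q : Type*} (S : QuandleStruct Q) : Prop :=
  ∃ D : AffineData, S.QIso (affineQuandle D.carrier D.equivAdd)

end QuandleStruct

/-- The principal quandle `Q(G, f)` with `a * b = a f(a⁻¹ b)`. -/
def principalQuandle (G : Type*) [Group G] (f : G ≃* G) : QuandleStruct G where
  act a b := a * f (a⁻¹ * b)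
  act_bijective a := by
    show Function.Bijective ((fun x : G => a * x) ∘ (⇑f) ∘ (fun b : G => a⁻¹ * b))
    exact ((Equiv.mulLeft a).bijective.comp f.bijective).comp (Equiv.mulLeft a⁻¹).bijective
  self_distrib a b c := by
    simp only [map_mul, map_inv, mul_inv_rev, inv_inv]
    group
  act_idem a := by simp

/-- An extraspecial `q`-group: a finite `q`-group whose center, derived
subgroup and Frattini subgroup coincide and have order `q`. -/
def IsExtraspecial (q : ℕ) (G : Type*) [Group G] : Prop :=
  Finite G ∧ IsPGroup q G ∧ Subgroup.center G = commutator G ∧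
    commutator G = frattini G ∧ Nat.card (Subgroup.center G) = q

/-- A bundled group. -/
structure GroupData : Type 1 where
  carrier : Type
  [grp : Group carrier]

attribute [instance] GroupData.grp

/-! If `σ ^ n = 1`, then `g⁻¹ f^n(g) ∈ H` for every `g`, so `f^n` is an automorphism commuting
with `f` that moves every element by a right factor fixed by `f`. Such an automorphism fixes
every `g f(g)⁻¹`, and these generate `G`. -/

theorem QuotientGroup.perm_pow_mk {G : Type*} [Group G] {H : Subgroup G} {f : MulAut G}
    {σ : Equiv.Perm (G ⧸ H)} (hσ : ∀ g : G, σ g = f g) (n : ℕ) (g : G) :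
    (σ ^ n) (g : G ⧸ H) = ((f ^ n) g : G) := by
  rw [Equiv.Perm.coe_pow, hom_coe_pow DFunLike.coe rfl (fun _ _ => rfl) f n]
  exact (Function.Semiconj.iterate_right (fun g => (hσ g).symm) n g).symm

namespace MulAut

variable {G : Type*} [Group G] {f φ : MulAut G}

/-- Writing `φ g = g k` with `f k = k`, both `φ g` and `f (φ g) = f g * k` pick up the same
right factor `k`, which cancels in `φ g * (f (φ g))⁻¹`. -/
theorem apply_mul_inv_apply_eq_of_commute (hcomm : Commute f φ) {g : G}
    (hg : f (g⁻¹ * φ g) = g⁻¹ * φ g) : φ (g * (f g)⁻¹) = g * (f g)⁻¹ := by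
  have hφf : φ (f g) = f (φ g) := congrArg (· g) hcomm.symm.eq
  have hfφ : f (φ g) = f g * (g⁻¹ * φ g) := by rw [← hg, ← map_mul, mul_inv_cancel_left]
  rw [map_mul, map_inv, hφf, hfφ]
  group

theorem eq_one_of_commute_of_closure_eq_top
    (hgen : Subgroup.closure {x : G | ∃ g : G, x = g * (f g)⁻¹} = ⊤) (hcomm : Commute f φ)
    (hfix : ∀ g : G, f (g⁻¹ * φ g) = g⁻¹ * φ g) : φ = 1 := by
  have h : φ.toMonoidHom = MonoidHom.id G := by
    refine MonoidHom.eq_of_eqOn_dense hgen ?_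
    rintro _ ⟨g, rfl⟩
    exact apply_mul_inv_apply_eq_of_commute hcomm (hfix g)
  ext g
  exact DFunLike.congr_fun h g

end MulAut

theorem statement6_general {G : Type u} [Group G] (f : MulAut G)
    (H : Subgroup G) (hH : ∀ h ∈ H, f h = h)
    (hgen : Subgroup.closure {x : G | ∃ g : G, x = g * (f g)⁻¹} = ⊤)
    (σ : Equiv.Perm (G ⧸ H))
    (hσ : ∀ g : G, σ (QuotientGroup.mk g) = QuotientGroup.mk (f g)) :
    orderOf f = orderOf σ := by
  rw [orderOf_eq_orderOf_iff]
  intro n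
  constructor
  · intro hf
    ext x
    induction x using QuotientGroup.induction_on with
    | H g => rw [QuotientGroup.perm_pow_mk hσ, hf]; rfl
  · intro hs
    refine MulAut.eq_one_of_commute_of_closure_eq_top hgen (Commute.self_pow f n) fun g => ?_
    refine hH _ (QuotientGroup.eq.mp ?_)
    rw [← QuotientGroup.perm_pow_mk hσ, hs]
    rfl

/-- Let `G` be a finite group, `f` an automorphism, and
`H ≤ Fix(f)` a subgroup. If `G` is generated by `{g·f(g)⁻¹}`, then the order
of `f` equals the order of the induced permutation of `G/H`. -/
theorem statement6 {G : Type u} [Group G] [Finite G] (f : MulAut G)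
    (H : Subgroup G) (hH : ∀ h ∈ H, f h = h)
    (hgen : Subgroup.closure {x : G | ∃ g : G, x = g * (f g)⁻¹} = ⊤)
    (σ : Equiv.Perm (G ⧸ H))
    (hσ : ∀ g : G, σ (QuotientGroup.mk g) = QuotientGroup.mk (f g)) :
    orderOf f = orderOf σ :=
  statement6_general f H hH hgen σ hσ
end

section
/- Let Q be a finite connected locally strictly simple quandle. Then: (i) for any two distinct congruences α, β of Q, both different from 1_Q, we have α ∧ β = 0_Q; (ii) for every congruence α of Q with 0_Q ≠ α ≠ 1_Q, the quotient quandle Q/α is strictly simple. -/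
/-!  Basic theory of quandles: structures, subquandles, congruences,
quotients, displacement groups, affine and principal quandles. -/

universe u v

/-! Congruences are invariant under `Dis(Q)`, so in a connected quandle a congruence with one
nontrivial block has only nontrivial blocks. In a strictly simple quandle a congruence relating
two distinct elements is full, since its blocks are subquandles. By the LSS property this
applies inside every proper subquandle `T` with at least two elements: a congruence relating two
distinct elements of `T` relates all of `T`. For (i), take `T` an `α`-block: if `α ∧ β ≠ 0_Q`,
then `T` lies in a `β`-block, so `α ≤ β`, and symmetrically. For (ii), take `T` the preimage of
a proper subquandle of `Q/α`: it would lie in a single `α`-block, so its image would be a single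
point. -/

namespace QuandleStruct

variable {Q : Type*} {S : QuandleStruct Q} {r s : Q → Q → Prop}

lemma exists_rel_ne_of_ne_eq (hrefl : ∀ a, r a a) (h : r ≠ fun a b : Q => a = b) :
    ∃ a b, r a b ∧ a ≠ b := by
  by_contra! hr
  exact h (funext₂ fun a b => propext ⟨hr a b, fun hab => hab ▸ hrefl a⟩)

lemma exists_not_rel_of_ne_true (h : r ≠ fun _ _ : Q => True) : ∃ a b, ¬ r a b := by
  by_contra! hr
  exact h (funext₂ fun a b => eq_true (hr a b))

def relStabilizer (r : Q → Q → Prop) : Subgroup (Equiv.Perm Q) where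
  carrier := {g | ∀ a b, r (g a) (g b) ↔ r a b}
  one_mem' _ _ := Iff.rfl
  mul_mem' hg hh a b := (hg _ _).trans (hh a b)
  inv_mem' {g} hg a b := by simpa using (hg (g⁻¹ a) (g⁻¹ b)).symm

namespace IsCongruence

lemma inf (hr : S.IsCongruence r) (hs : S.IsCongruence s) :
    S.IsCongruence fun a b => r a b ∧ s a b where
  equiv :=
    ⟨fun a => ⟨hr.equiv.refl a, hs.equiv.refl a⟩,
      fun h => ⟨hr.equiv.symm h.1, hs.equiv.symm h.2⟩,
      fun h h' => ⟨hr.equiv.trans h.1 h'.1, hs.equiv.trans h.2 h'.2⟩⟩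
  act_comp h h' := ⟨hr.act_comp h.1 h'.1, hs.act_comp h.2 h'.2⟩
  ldiv_comp h h' := ⟨hr.ldiv_comp h.1 h'.1, hs.ldiv_comp h.2 h'.2⟩

lemma L_mem_relStabilizer (hr : S.IsCongruence r) (a : Q) : S.L a ∈ relStabilizer r :=
  fun x y => ⟨fun h => by simpa using hr.ldiv_comp (hr.equiv.refl a) h,
    hr.act_comp (hr.equiv.refl a)⟩

lemma dis_le_relStabilizer (hr : S.IsCongruence r) : S.Dis ≤ relStabilizer r := by
  refine (Subgroup.closure_le _).2 ?_
  rintro _ ⟨a, b, rfl⟩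
  exact mul_mem (hr.L_mem_relStabilizer a) (inv_mem (hr.L_mem_relStabilizer b))

lemma block_ne_univ (hr : S.IsCongruence r) (h : r ≠ fun _ _ : Q => True) (a : Q) :
    {b | r a b} ≠ Set.univ := by
  obtain ⟨c, d, hcd⟩ := exists_not_rel_of_ne_true h
  intro hblock
  have hc : r a c := Set.eq_univ_iff_forall.1 hblock c
  have hd : r a d := Set.eq_univ_iff_forall.1 hblock d
  exact hcd (hr.equiv.trans (hr.equiv.symm hc) hd)

end IsCongruence

lemma Connected.exists_rel_ne_of_rel (hconn : S.Connected) (hr : S.IsCongruence r) {a b : Q}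
    (hab : r a b) (hne : a ≠ b) (c : Q) : ∃ d, r c d ∧ c ≠ d := by
  obtain ⟨g, hg, rfl⟩ := hconn a c
  exact ⟨g b, (hr.dis_le_relStabilizer hg a b).2 hab, g.injective.ne hne⟩

lemma restrict_ldiv_val {T : Set Q} (hT : S.IsSubquandle T) (x y : T) :
    ((S.restrict T hT).ldiv x y : Q) = S.ldiv x y := by
  have h : S.act x ((S.restrict T hT).ldiv x y : Q) = y :=
    congrArg Subtype.val ((S.restrict T hT).act_ldiv x y)
  exact (S.ldiv_act _ _).symm.trans (congrArg (S.ldiv x) h)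

lemma IsCongruence.restrict (hs : S.IsCongruence s) {T : Set Q} (hT : S.IsSubquandle T) :
    (S.restrict T hT).IsCongruence fun x y : T => s x y where
  equiv := hs.equiv.comap Subtype.val
  act_comp h h' := hs.act_comp h h'
  ldiv_comp h h' := by simpa only [restrict_ldiv_val] using hs.ldiv_comp h h'

lemma StrictlySimple.rel_of_rel_ne (hS : S.StrictlySimple) (hs : S.IsCongruence s) {a b : Q}
    (hab : s a b) (hne : a ≠ b) (c : Q) : s a c :=
  Set.eq_univ_iff_forall.1
    (hS.2 _ (S.block_isSubquandle hs a) ⟨a, hs.equiv.refl a, b, hab, hne⟩) c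

lemma LSS.subset_block (hlss : S.LSS) {T : Set Q} (hT : S.IsSubquandle T)
    (hTne : T ≠ Set.univ) (hs : S.IsCongruence s) {a b : Q} (ha : a ∈ T) (hb : b ∈ T)
    (hab : s a b) (hne : a ≠ b) : T ⊆ {c | s a c} := fun c hc =>
  (hlss T hT ⟨a, ha, b, hb, hne⟩ hTne).rel_of_rel_ne (hs.restrict hT) (a := ⟨a, ha⟩)
    (b := ⟨b, hb⟩) hab (fun h => hne (congrArg Subtype.val h)) ⟨c, hc⟩

lemma LSS.rel_of_rel_of_inf (hconn : S.Connected) (hlss : S.LSS) (hr : S.IsCongruence r)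
    (hs : S.IsCongruence s) (hr1 : r ≠ fun _ _ : Q => True) {a₀ b₀ : Q}
    (h₀ : r a₀ b₀ ∧ s a₀ b₀) (hne : a₀ ≠ b₀) {a b : Q} (hab : r a b) : s a b := by
  obtain ⟨c, hac, hne'⟩ := hconn.exists_rel_ne_of_rel (hr.inf hs) h₀ hne a
  exact hlss.subset_block (S.block_isSubquandle hr a) (hr.block_ne_univ hr1 a) hs
    (hr.equiv.refl a) hac.1 hac.2 hne' hab

theorem LSS.inf_eq_eq_of_ne (hconn : S.Connected) (hlss : S.LSS) (hr : S.IsCongruence r)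
    (hs : S.IsCongruence s) (hrs : r ≠ s) (hr1 : r ≠ fun _ _ : Q => True)
    (hs1 : s ≠ fun _ _ : Q => True) : (fun a b => r a b ∧ s a b) = fun a b : Q => a = b := by
  funext a b
  refine propext ⟨fun h => by_contra fun hne => hrs ?_, fun h => h ▸ (hr.inf hs).equiv.refl a⟩
  exact funext₂ fun x y => propext ⟨hlss.rel_of_rel_of_inf hconn hr hs hr1 h hne,
    hlss.rel_of_rel_of_inf hconn hs hr hs1 h.symm hne⟩

lemma quot_mk_act (hr : S.IsCongruence r) (a b : Q) :
    (S.quot hr).act ⟦a⟧ ⟦b⟧ = (⟦S.act a b⟧ : Quotient hr.setoid) := rfl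

lemma quot_mk_ldiv (hr : S.IsCongruence r) (a b : Q) :
    (S.quot hr).ldiv ⟦a⟧ ⟦b⟧ = (⟦S.ldiv a b⟧ : Quotient hr.setoid) := by
  conv_lhs => rw [← S.act_ldiv a b, ← quot_mk_act, ldiv_act]

lemma IsSubquandle.preimage_quot_mk (hr : S.IsCongruence r) {u : Set (Quotient hr.setoid)}
    (hu : (S.quot hr).IsSubquandle u) : S.IsSubquandle (Quotient.mk hr.setoid ⁻¹' u) := by
  obtain ⟨x, hx⟩ := hu.1
  obtain ⟨x, rfl⟩ := Quotient.mk_surjective x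
  refine ⟨⟨x, hx⟩, fun a ha b hb => ?_⟩
  simpa only [Set.mem_preimage, ← quot_mk_act, ← quot_mk_ldiv] using hu.2 _ ha _ hb

theorem LSS.quot_strictlySimple (hconn : S.Connected) (hlss : S.LSS) (hr : S.IsCongruence r)
    (hr0 : r ≠ fun a b : Q => a = b) (hr1 : r ≠ fun _ _ : Q => True) :
    (S.quot hr).StrictlySimple := by
  obtain ⟨a₀, b₀, h₀, hne₀⟩ := exists_rel_ne_of_ne_eq hr.equiv.refl hr0
  obtain ⟨c, d, hcd⟩ := exists_not_rel_of_ne_true hr1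
  refine ⟨⟨⟦c⟧, ⟦d⟧, fun h => hcd (Quotient.exact h)⟩, fun u hu ⟨x, hx, y, hy, hxy⟩ => ?_⟩
  obtain ⟨x, rfl⟩ := Quotient.mk_surjective x
  obtain ⟨y, rfl⟩ := Quotient.mk_surjective y
  set T := Quotient.mk hr.setoid ⁻¹' u
  suffices hT : T = Set.univ from
    Set.eq_univ_of_forall (Quotient.ind fun a => (hT ▸ Set.mem_univ a : a ∈ T))
  by_contra hTne
  obtain ⟨b, hxb, hne⟩ := hconn.exists_rel_ne_of_rel hr h₀ hne₀ x
  have hb : b ∈ T := by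
    show ⟦b⟧ ∈ u
    rwa [← Quotient.sound hxb]
  have hT_block := hlss.subset_block (hu.preimage_quot_mk hr) hTne hr hx hb hxb hne
  exact hxy (Quotient.sound (hT_block hy))

end QuandleStruct

theorem statement7_general {Q : Type u} (S : QuandleStruct Q)
    (hconn : S.Connected) (hlss : S.LSS) :
    (∀ r s : Q → Q → Prop, S.IsCongruence r → S.IsCongruence s → r ≠ s →
      r ≠ (fun _ _ : Q => True) → s ≠ (fun _ _ : Q => True) →
      (fun a b => r a b ∧ s a b) = (fun a b : Q => a = b)) ∧
    (∀ (r : Q → Q → Prop) (hr : S.IsCongruence r),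
      r ≠ (fun a b : Q => a = b) → r ≠ (fun _ _ : Q => True) →
      (S.quot hr).StrictlySimple) :=
  ⟨fun _ _ => hlss.inf_eq_eq_of_ne hconn, fun _ => hlss.quot_strictlySimple hconn⟩

/-- For a finite connected LSS quandle: (i) any two distinct
congruences different from `1_Q` intersect in `0_Q`; (ii) every quotient by a
proper congruence is strictly simple. -/
theorem statement7 {Q : Type u} [Finite Q] (S : QuandleStruct Q)
    (hconn : S.Connected) (hlss : S.LSS) :
    (∀ r s : Q → Q → Prop, S.IsCongruence r → S.IsCongruence s → r ≠ s →
      r ≠ (fun _ _ : Q => True) → s ≠ (fun _ _ : Q => True) →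
      (fun a b => r a b ∧ s a b) = (fun a b : Q => a = b)) ∧
    (∀ (r : Q → Q → Prop) (hr : S.IsCongruence r),
      r ≠ (fun a b : Q => a = b) → r ≠ (fun _ _ : Q => True) →
      (S.quot hr).StrictlySimple) :=
  statement7_general S hconn hlss
end

section
/- Let p be a prime, n ≥ 1, and f ∈ GL_n(Z_p) with 1−f invertible, and let Q = Aff(Z_p^n, f) (which is then a connected quandle). The following are equivalent: (i) Q is a non-simple, subdirectly irreducible, locally strictly simple quandle; (ii) the Z_p[t]-module with underlying group Z_p^n, on which t acts as f, is isomorphic to Z_p[t]/(g²) for some irreducible polynomial g over Z_p. Moreover, in this case n is even. -/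
/-!  Basic theory of quandles: structures, subquandles, congruences,
quotients, displacement groups, affine and principal quandles. -/

universe u v

open Polynomial

set_option linter.unusedSectionVars false
set_option maxHeartbeats 1000000
set_option synthInstance.maxHeartbeats 400000

namespace S11

variable {p : ℕ} [Fact p.Prime] {V : Type*} [AddCommGroup V] [Module (ZMod p) V] [Finite V]

/-- Abbreviation for the affine quandle given by a linear automorphism. -/
abbrev aq (f : V ≃ₗ[ZMod p] V) : QuandleStruct V := affineQuandle V f.toAddEquiv

/-- "Good" sets: additive subgroups invariant under `f` and `f.symm`. -/
def Good (f : V ≃ₗ[ZMod p] V) (T : Set V) : Prop :=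
  (0:V) ∈ T ∧ (∀ x ∈ T, ∀ y ∈ T, x + y ∈ T) ∧ (∀ x ∈ T, -x ∈ T) ∧
    (∀ x ∈ T, f x ∈ T) ∧ (∀ x ∈ T, f.symm x ∈ T)

lemma symm_mem_of_mapsTo (f : V ≃ₗ[ZMod p] V) {T : Set V} (h : ∀ x ∈ T, f x ∈ T) :
    ∀ x ∈ T, f.symm x ∈ T := by
  have himg : (⇑f) '' T = T := by
    apply Set.eq_of_subset_of_ncard_le
    · rintro y ⟨x, hx, rfl⟩; exact h x hx
    · rw [Set.ncard_image_of_injective _ f.injective]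
    · exact T.toFinite
  intro x hx
  rw [← himg] at hx
  obtain ⟨y, hy, rfl⟩ := hx
  simpa using hy

lemma aq_coe (f : V ≃ₗ[ZMod p] V) : (⇑f.toAddEquiv : V → V) = ⇑f := rfl

lemma act_eq (f : V ≃ₗ[ZMod p] V) (a b : V) : (aq f).act a b = a - f a + f b := rfl

lemma ldiv_eq (f : V ≃ₗ[ZMod p] V) (a b : V) :
    (aq f).ldiv a b = f.symm (b - a) + a := by
  have key : (aq f).act a (f.symm (b - a) + a) = b := by
    show a - f.toAddEquiv a + f.toAddEquiv (f.symm (b - a) + a) = b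
    rw [aq_coe, map_add, f.apply_symm_apply]
    abel
  apply ((aq f).act_bijective a).1
  rw [(aq f).act_ldiv a b, key]

lemma isCongruence_of_good (f : V ≃ₗ[ZMod p] V) {T : Set V} (hT : Good f T) :
    (aq f).IsCongruence (fun a b => b - a ∈ T) := by
  obtain ⟨h0, hadd, hneg, hfm, hfs⟩ := hT
  constructor
  · constructor
    · intro a; simpa using h0
    · intro a b hab
      have := hneg _ hab; rwa [neg_sub] at this
    · intro a b c hab hbc
      have := hadd _ hab _ hbc
      rwa [show b - a + (c - b) = c - a by abel] at this
  · intro a b c d hab hcd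
    have key : (aq f).act b d - (aq f).act a c = (b - a) + (-(f (b - a)) + f (d - c)) := by
      rw [act_eq, act_eq, map_sub, map_sub]
      abel
    rw [key]
    exact hadd _ hab _ (hadd _ (hneg _ (hfm _ hab)) _ (hfm _ hcd))
  · intro a b c d hab hcd
    have key : (aq f).ldiv b d - (aq f).ldiv a c
        = f.symm ((d - c) + (-(b - a))) + (b - a) := by
      simp only [ldiv_eq, map_add, map_sub, map_neg]
      abel
    rw [key]
    exact hadd _ (hfs _ (hadd _ hcd _ (hneg _ hab))) _ hab

/-- Subquandles are cosets of good sets. -/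
lemma good_of_subquandle (f : V ≃ₗ[ZMod p] V)
    (hf : Function.Bijective (fun x : V => x - f x)) {s : Set V}
    (hs : (aq f).IsSubquandle s) {a : V} (ha : a ∈ s) :
    Good f {x | a + x ∈ s} ∧ s = (a + ·) '' {x | a + x ∈ s} := by
  set T : Set V := {x | a + x ∈ s} with hTdef
  have h0 : (0:V) ∈ T := by simpa [hTdef] using ha
  have hstar : ∀ x ∈ T, ∀ y ∈ T, x - f x + f y ∈ T := by
    intro x hx y hy
    have hmem := (hs.2 _ hx _ hy).1
    have : (aq f).act (a + x) (a + y) = a + (x - f x + f y) := by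
      rw [act_eq, map_add, map_add]; abel
    rw [this] at hmem
    exact hmem
  have hldiv : ∀ x ∈ T, ∀ y ∈ T, f.symm (y - x) + x ∈ T := by
    intro x hx y hy
    have hmem := (hs.2 _ hx _ hy).2
    have : (aq f).ldiv (a + x) (a + y) = a + (f.symm (y - x) + x) := by
      rw [ldiv_eq, show a + y - (a + x) = y - x by abel]; abel
    rw [this] at hmem
    exact hmem
  have hfm : ∀ y ∈ T, f y ∈ T := by
    intro y hy
    have := hstar 0 h0 y hy
    simpa using this
  have hfs : ∀ y ∈ T, f.symm y ∈ T := by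
    intro y hy
    have := hldiv 0 h0 y hy
    simpa using this
  have hshift : ∀ x ∈ T, ∀ y ∈ T, (x - f x) + y ∈ T := by
    intro x hx y hy
    have := hstar x hx (f.symm y) (hfs y hy)
    rwa [f.apply_symm_apply] at this
  -- T is closed under the injection d := (· - f ·), with image T
  have himg : (fun x : V => x - f x) '' T = T := by
    apply Set.eq_of_subset_of_ncard_le
    · rintro y ⟨x, hx, rfl⟩
      have := hshift x hx 0 h0
      simpa using this
    · rw [Set.ncard_image_of_injective _ hf.1]
    · exact T.toFinite
  have hadd : ∀ x ∈ T, ∀ y ∈ T, x + y ∈ T := by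
    intro x hx y hy
    have hy' : y ∈ (fun x : V => x - f x) '' T := by rw [himg]; exact hy
    obtain ⟨w, hw, rfl⟩ := hy'
    have := hshift w hw x hx
    rwa [add_comm] at this
  have hneg : ∀ x ∈ T, -x ∈ T := by
    intro x hx
    have himg2 : (fun u : V => x + u) '' T = T := by
      apply Set.eq_of_subset_of_ncard_le
      · rintro y ⟨u, hu, rfl⟩; exact hadd x hx u hu
      · rw [Set.ncard_image_of_injective _ (add_right_injective x)]
      · exact T.toFinite
    have h0' : (0:V) ∈ (fun u : V => x + u) '' T := by rw [himg2]; exact h0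
    obtain ⟨u, hu, hux⟩ := h0'
    have hu' : u = -x := eq_neg_of_add_eq_zero_right hux
    rwa [hu'] at hu
  refine ⟨⟨h0, hadd, hneg, hfm, hfs⟩, ?_⟩
  ext z
  constructor
  · intro hz
    exact ⟨z - a, by simpa [hTdef] using hz, by simp⟩
  · rintro ⟨t, ht, rfl⟩
    exact ht

lemma isSubquandle_of_good (f : V ≃ₗ[ZMod p] V) {T : Set V} (hT : Good f T) (a : V) :
    (aq f).IsSubquandle ((a + ·) '' T) := by
  obtain ⟨h0, hadd, hneg, hfm, hfs⟩ := hT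
  constructor
  · exact ⟨a, 0, h0, by simp⟩
  · rintro _ ⟨x, hx, rfl⟩ _ ⟨y, hy, rfl⟩
    constructor
    · refine ⟨x - f x + f y, ?_, ?_⟩
      · simpa [sub_eq_add_neg] using hadd _ (hadd _ hx _ (hneg _ (hfm _ hx))) _ (hfm _ hy)
      · show a + (x - f x + f y) = (aq f).act (a + x) (a + y)
        rw [act_eq, map_add, map_add]; abel
    · refine ⟨f.symm (y - x) + x, ?_, ?_⟩
      · simpa [sub_eq_add_neg] using hadd _ (hfs _ (hadd _ hy _ (hneg _ hx))) _ hx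
      · show a + (f.symm (y - x) + x) = (aq f).ldiv (a + x) (a + y)
        rw [ldiv_eq, show a + y - (a + x) = y - x by abel]; abel

lemma congruence_char (f : V ≃ₗ[ZMod p] V)
    (hf : Function.Bijective (fun x : V => x - f x))
    {r : V → V → Prop} (hr : (aq f).IsCongruence r) :
    Good f {x | r 0 x} ∧ ∀ a b, r a b ↔ b - a ∈ {x | r 0 x} := by
  have hblk : (aq f).IsSubquandle {b | r 0 b} := (aq f).block_isSubquandle hr 0
  have h0blk : (0:V) ∈ {b | r 0 b} := hr.equiv.refl 0
  obtain ⟨hgood, -⟩ := good_of_subquandle f hf hblk h0blk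
  have hset : {x | (0:V) + x ∈ {b | r 0 b}} = {x | r 0 x} := by ext x; simp
  rw [hset] at hgood
  -- translation invariance
  have htrans : ∀ c x y : V, r x y → r (x + c) (y + c) := by
    intro c x y hxy
    obtain ⟨w, hw⟩ := hf.2 c
    have h1 := hr.ldiv_comp (hr.equiv.refl 0) hxy
    have h2 := hr.act_comp (hr.equiv.refl w) h1
    have key : ∀ z : V, (aq f).act w ((aq f).ldiv 0 z) = z + c := by
      intro z
      rw [ldiv_eq, act_eq, map_add, f.apply_symm_apply, map_zero, ← hw]
      beta_reduce
      abel
    rwa [key, key] at h2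
  refine ⟨hgood, fun a b => ⟨fun hab => ?_, fun hab => ?_⟩⟩
  · have := htrans (-a) a b hab
    rwa [add_neg_cancel, show b + -a = b - a by abel] at this
  · have := htrans a 0 (b - a) hab
    rwa [zero_add, sub_add_cancel] at this

end S11

namespace QuandleStruct

variable {Q : Type*}

lemma restrict_act_coe (S : QuandleStruct Q) (s : Set Q) (hs : S.IsSubquandle s)
    (a b : ↥s) : ((S.restrict s hs).act a b).1 = S.act a.1 b.1 := rfl

lemma restrict_ldiv_coe (S : QuandleStruct Q) (s : Set Q) (hs : S.IsSubquandle s)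
    (a b : ↥s) : ((S.restrict s hs).ldiv a b).1 = S.ldiv a.1 b.1 := by
  apply (S.act_bijective a.1).1
  have h1 : S.act a.1 ((S.restrict s hs).ldiv a b).1 = b.1 := by
    rw [← restrict_act_coe S s hs]
    rw [(S.restrict s hs).act_ldiv a b]
  rw [h1, S.act_ldiv]

lemma sub_of_restrict (S : QuandleStruct Q) (s : Set Q) (hs : S.IsSubquandle s)
    {t : Set ↥s} (ht : (S.restrict s hs).IsSubquandle t) :
    S.IsSubquandle (Subtype.val '' t) := by
  constructor
  · obtain ⟨x, hx⟩ := ht.1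
    exact ⟨x.1, x, hx, rfl⟩
  · rintro _ ⟨x, hx, rfl⟩ _ ⟨y, hy, rfl⟩
    obtain ⟨hact, hldiv⟩ := ht.2 x hx y hy
    constructor
    · exact ⟨_, hact, restrict_act_coe S s hs x y⟩
    · exact ⟨_, hldiv, restrict_ldiv_coe S s hs x y⟩

lemma restrict_of_sub (S : QuandleStruct Q) (s : Set Q) (hs : S.IsSubquandle s)
    {u : Set Q} (hu : S.IsSubquandle u) (hsub : u ⊆ s) :
    (S.restrict s hs).IsSubquandle {x : ↥s | x.1 ∈ u} := by
  constructor
  · obtain ⟨a, ha⟩ := hu.1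
    exact ⟨⟨a, hsub ha⟩, ha⟩
  · intro x hx y hy
    obtain ⟨hact, hldiv⟩ := hu.2 x.1 hx y.1 hy
    constructor
    · show ((S.restrict s hs).act x y).1 ∈ u
      rw [restrict_act_coe]; exact hact
    · show ((S.restrict s hs).ldiv x y).1 ∈ u
      rw [restrict_ldiv_coe]; exact hldiv

end QuandleStruct

namespace S11

variable {p : ℕ} [Fact p.Prime] {V : Type*} [AddCommGroup V] [Module (ZMod p) V] [Finite V]

lemma good_ne_singleton_iff {T : Set V} (h0 : (0:V) ∈ T) :
    T ≠ {0} ↔ ∃ x ∈ T, x ≠ 0 := by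
  constructor
  · intro h
    by_contra hc
    push_neg at hc
    exact h (Set.eq_singleton_iff_unique_mem.mpr ⟨h0, fun x hx => by
      by_contra hne; exact hne (hc x hx)⟩)
  · rintro ⟨x, hx, hxne⟩ rfl
    exact hxne hx

theorem bridge (f : V ≃ₗ[ZMod p] V)
    (hf : Function.Bijective (fun x : V => x - f x)) :
    (¬ (aq f).Simple ∧ (aq f).SubdirectlyIrreducible ∧ (aq f).LSS) ↔
    (∃ N : Set V, Good f N ∧ N ≠ {0} ∧ N ≠ Set.univ ∧
       ∀ T : Set V, Good f T → T = {0} ∨ T = N ∨ T = Set.univ) := by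
  constructor
  · rintro ⟨hnsimp, ⟨a0, b0, hne0, hSI⟩, hLSS⟩
    set v₀ : V := b0 - a0 with hv₀
    have hv₀ne : v₀ ≠ 0 := sub_ne_zero.mpr (fun h => hne0 h.symm)
    -- step 1 : every good set other than {0} contains v₀
    have step1 : ∀ T : Set V, Good f T → T ≠ {0} → v₀ ∈ T := by
      intro T hT hTne
      obtain ⟨x, hx, hxne⟩ := (good_ne_singleton_iff hT.1).mp hTne
      have hcong := isCongruence_of_good f hT
      have hne : (fun a b : V => b - a ∈ T) ≠ (fun a b : V => a = b) := by
        intro heq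
        have : x - 0 ∈ T := by simpa using hx
        have h2 : (fun a b : V => b - a ∈ T) 0 x := by simpa using this
        rw [heq] at h2
        exact hxne h2.symm
      exact hSI _ hcong hne
    -- step 2 : a proper good set N exists
    rw [QuandleStruct.Simple] at hnsimp
    push_neg at hnsimp
    obtain ⟨r, hr, hre, hrf⟩ := hnsimp
    obtain ⟨hgood, hchar⟩ := congruence_char f hf hr
    set N : Set V := {x | r 0 x} with hNdef
    have hN0 : N ≠ {0} := by
      intro h
      apply hre
      funext a b
      apply propext
      rw [hchar a b, h]
      simp [sub_eq_zero, eq_comm]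
    have hNu : N ≠ Set.univ := by
      intro h
      apply hrf
      funext a b
      apply propext
      rw [hchar a b, h]
      simp
    -- step 3 : proper good sets have no proper good subsets
    have step3 : ∀ T : Set V, Good f T → T ≠ {0} → T ≠ Set.univ →
        ∀ U : Set V, Good f U → U ⊆ T → U ≠ {0} → U = T := by
      intro T hT hTne hTu U hU hUT hUne
      have hTs' := isSubquandle_of_good f hT 0
      have hTset : ((0:V) + ·) '' T = T := by ext z; simp
      rw [hTset] at hTs'
      obtain ⟨x₁, hx₁, hx₁ne⟩ := (good_ne_singleton_iff hT.1).mp hTne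
      have hTnt : T.Nontrivial := ⟨x₁, hx₁, 0, hT.1, hx₁ne⟩
      have hss := hLSS T hTs' hTnt hTu
      -- the subquandle of the restriction induced by U
      have hUs' := isSubquandle_of_good f hU 0
      have hUset : ((0:V) + ·) '' U = U := by ext z; simp
      rw [hUset] at hUs'
      have ht := QuandleStruct.restrict_of_sub (aq f) T hTs' hUs' hUT
      obtain ⟨u₁, hu₁, hu₁ne⟩ := (good_ne_singleton_iff hU.1).mp hUne
      have htnt : ({x : ↥T | x.1 ∈ U} : Set ↥T).Nontrivial := by
        refine ⟨⟨u₁, hUT hu₁⟩, hu₁, ⟨0, hT.1⟩, hU.1, ?_⟩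
        intro h
        exact hu₁ne (congrArg Subtype.val h)
      have := hss.2 _ ht htnt
      apply Set.Subset.antisymm hUT
      intro z hz
      have : (⟨z, hz⟩ : ↥T) ∈ ({x : ↥T | x.1 ∈ U} : Set ↥T) := by
        rw [this]; trivial
      exact this
    refine ⟨N, hgood, hN0, hNu, ?_⟩
    intro T hT
    by_cases hT0 : T = {0}
    · exact Or.inl hT0
    by_cases hTu : T = Set.univ
    · exact Or.inr (Or.inr hTu)
    refine Or.inr (Or.inl ?_)
    -- T = N via the intersection
    have hUgood : Good f (T ∩ N) := by
      obtain ⟨t0, tadd, tneg, tf, tfs⟩ := hT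
      obtain ⟨n0, nadd, nneg, nf, nfs⟩ := hgood
      exact ⟨⟨t0, n0⟩, fun x hx y hy => ⟨tadd x hx.1 y hy.1, nadd x hx.2 y hy.2⟩,
        fun x hx => ⟨tneg x hx.1, nneg x hx.2⟩, fun x hx => ⟨tf x hx.1, nf x hx.2⟩,
        fun x hx => ⟨tfs x hx.1, nfs x hx.2⟩⟩
    have hvT := step1 T hT hT0
    have hvN := step1 N hgood hN0
    have hUne : T ∩ N ≠ {0} := by
      rw [good_ne_singleton_iff hUgood.1]
      exact ⟨v₀, ⟨hvT, hvN⟩, hv₀ne⟩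
    have h1 := step3 T hT hT0 hTu (T ∩ N) hUgood Set.inter_subset_left hUne
    have h2 := step3 N hgood hN0 hNu (T ∩ N) hUgood Set.inter_subset_right hUne
    rw [← h1, h2]
  · rintro ⟨N, hN, hN0, hNu, hclass⟩
    obtain ⟨x₀, hx₀, hx₀ne⟩ := (good_ne_singleton_iff hN.1).mp hN0
    obtain ⟨y₀, hy₀⟩ := (Set.ne_univ_iff_exists_notMem N).mp hNu
    have hcongN := isCongruence_of_good f hN
    refine ⟨?_, ?_, ?_⟩
    · -- not simple
      intro hsimp
      rcases hsimp _ hcongN with h | h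
      · have hx : (fun a b : V => b - a ∈ N) 0 x₀ := by simpa using hx₀
        rw [h] at hx
        exact hx₀ne hx.symm
      · have hy : (fun a b : V => b - a ∈ N) 0 y₀ := by rw [h]; trivial
        simp only [sub_zero] at hy
        exact hy₀ hy
    · -- subdirectly irreducible
      refine ⟨x₀, 0, hx₀ne, ?_⟩
      intro r hr hrne
      obtain ⟨hgood, hchar⟩ := congruence_char f hf hr
      have hTne : {x | r 0 x} ≠ {0} := by
        intro h
        apply hrne
        funext a b
        apply propext
        rw [hchar a b, h]
        simp [sub_eq_zero, eq_comm]
      rcases hclass _ hgood with h | h | h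
      · exact absurd h hTne
      · rw [hchar, h]
        simpa using hN.2.2.1 x₀ hx₀
      · rw [hchar, h]
        trivial
    · -- LSS
      intro s hs hsnt hsu
      obtain ⟨a, ha⟩ := hsnt.nonempty
      obtain ⟨hgoodT, hseq⟩ := good_of_subquandle f hf hs ha
      set T : Set V := {x | a + x ∈ s} with hTdef
      have hTN : T = N := by
        rcases hclass T hgoodT with h | h | h
        · exfalso
          rw [h] at hseq
          obtain ⟨z1, hz1, z2, hz2, hz12⟩ := hsnt
          rw [hseq] at hz1 hz2
          obtain ⟨w1, hw1, rfl⟩ := hz1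
          obtain ⟨w2, hw2, rfl⟩ := hz2
          rw [Set.mem_singleton_iff] at hw1 hw2
          rw [hw1, hw2] at hz12
          exact hz12 rfl
        · exact h
        · exfalso
          apply hsu
          rw [hseq, h]
          apply Set.eq_univ_of_forall
          intro z
          exact ⟨z - a, trivial, by simp⟩
      constructor
      · exact Set.nontrivial_coe_sort.mpr hsnt
      · intro t ht htnt
        -- push down to V
        have hu := QuandleStruct.sub_of_restrict (aq f) s hs ht
        have hunt : (Subtype.val '' t : Set V).Nontrivial := by
          obtain ⟨z1, hz1, z2, hz2, hz12⟩ := htnt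
          exact ⟨z1.1, ⟨z1, hz1, rfl⟩, z2.1, ⟨z2, hz2, rfl⟩,
            fun h => hz12 (Subtype.ext h)⟩
        obtain ⟨b, hb⟩ := hunt.nonempty
        obtain ⟨hgoodU, hueq⟩ := good_of_subquandle f hf hu hb
        set U : Set V := {x | b + x ∈ Subtype.val '' t} with hUdef
        have hbs : b ∈ s := by
          obtain ⟨z, hz, rfl⟩ := hb
          exact z.2
        have hbm : ∃ m ∈ N, b = a + m := by
          rw [hseq, hTN] at hbs
          obtain ⟨m, hm, hbm⟩ := hbs
          exact ⟨m, hm, hbm.symm⟩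
        obtain ⟨m, hm, hbm⟩ := hbm
        have hUsubN : U ⊆ N := by
          intro x hx
          have hbx : b + x ∈ s := by
            have : b + x ∈ Subtype.val '' t := hx
            obtain ⟨z, hz, hze⟩ := this
            rw [← hze]; exact z.2
          rw [hseq, hTN] at hbx
          obtain ⟨m', hm', hme⟩ := hbx
          have hxe : x = m' - m := by
            have hme' : a + m' = b + x := hme
            rw [hbm] at hme'
            have h1 : a + (m + x) = a + m' := by rw [hme']; abel
            have h2 : m + x = m' := add_left_cancel h1
            rw [← h2]; abel
          rw [hxe, show m' - m = m' + -m by abel]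
          exact hN.2.1 m' hm' (-m) (hN.2.2.1 m hm)
        have hUne : U ≠ {0} := by
          rw [good_ne_singleton_iff hgoodU.1]
          obtain ⟨z1, hz1, z2, hz2, hz12⟩ := hunt
          rcases (em (z1 - b = 0)) with h | h
          · refine ⟨z2 - b, ?_, ?_⟩
            · show b + (z2 - b) ∈ Subtype.val '' t
              rw [show b + (z2 - b) = z2 by abel]
              exact hz2
            · intro h2
              apply hz12
              rw [sub_eq_zero] at h h2
              rw [h, h2]
          · refine ⟨z1 - b, ?_, h⟩
            show b + (z1 - b) ∈ Subtype.val '' t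
            rw [show b + (z1 - b) = z1 by abel]
            exact hz1
        have hUN : U = N := by
          rcases hclass U hgoodU with h | h | h
          · exact absurd h hUne
          · exact h
          · exfalso
            apply hNu
            apply Set.eq_univ_of_univ_subset
            rw [← h]
            exact hUsubN
        -- now Subtype.val '' t = s
        have hts : Subtype.val '' t = s := by
          rw [hueq, hUN, hseq, hTN]
          ext z
          constructor
          · rintro ⟨w, hw, rfl⟩
            exact ⟨m + w, hN.2.1 m hm w hw, by rw [hbm]; abel⟩
          · rintro ⟨w, hw, rfl⟩
            refine ⟨w - m, ?_, by rw [hbm]; abel⟩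
            rw [show w - m = w + -m by abel]
            exact hN.2.1 w hw (-m) (hN.2.2.1 m hm)
        apply Set.eq_univ_of_forall
        intro x
        have hxs : x.1 ∈ Subtype.val '' t := by rw [hts]; exact x.2
        obtain ⟨y, hy, hyx⟩ := hxs
        rwa [← Subtype.ext hyx]

end S11

namespace S11

variable {p : ℕ} [Fact p.Prime] {V : Type*} [AddCommGroup V] [Module (ZMod p) V] [Finite V]

lemma zmod_smul_mem {T : Set V} (h0 : (0:V) ∈ T)
    (hadd : ∀ x ∈ T, ∀ y ∈ T, x + y ∈ T) (c : ZMod p) :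
    ∀ v ∈ T, c • v ∈ T := by
  intro v hv
  have hns : ∀ n : ℕ, n • v ∈ T := by
    intro n
    induction n with
    | zero => simpa using h0
    | succ k ih =>
      rw [succ_nsmul]
      exact hadd _ ih _ hv
  have : c • v = c.val • v := by
    rw [← Nat.cast_smul_eq_nsmul (ZMod p), ZMod.natCast_val, ZMod.cast_id]
  rw [this]
  exact hns _

lemma good_aeval_mem {f : V ≃ₗ[ZMod p] V} {T : Set V} (hT : Good f T)
    (q : (ZMod p)[X]) : ∀ v ∈ T, (Polynomial.aeval (f : V →ₗ[ZMod p] V) q) v ∈ T := by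
  obtain ⟨h0, hadd, hneg, hfm, hfs⟩ := hT
  induction q using Polynomial.induction_on with
  | C a =>
    intro v hv
    rw [aeval_C, Module.algebraMap_end_apply]
    exact zmod_smul_mem h0 hadd a v hv
  | add q r hq hr =>
    intro v hv
    rw [map_add, LinearMap.add_apply]
    exact hadd _ (hq v hv) _ (hr v hv)
  | monomial n a ih =>
    intro v hv
    have hrw : (C a * X ^ (n + 1) : (ZMod p)[X]) = X * (C a * X ^ n) := by ring
    rw [hrw, map_mul, aeval_X, Module.End.mul_apply]
    have h1 := ih v hv
    have : (↑f : V →ₗ[ZMod p] V) ((aeval (↑f : V →ₗ[ZMod p] V) (C a * X ^ n)) v)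
        = f ((aeval (↑f : V →ₗ[ZMod p] V) (C a * X ^ n)) v) := rfl
    rw [this]
    exact hfm _ h1

lemma submodule_of_good {f : V ≃ₗ[ZMod p] V} {T : Set V} (hT : Good f T) :
    ∃ W : Submodule (ZMod p)[X] (Module.AEval' (f : V →ₗ[ZMod p] V)),
      ∀ v : V, Module.AEval'.of (f : V →ₗ[ZMod p] V) v ∈ W ↔ v ∈ T := by
  refine ⟨{ carrier := {m | (Module.AEval'.of (f : V →ₗ[ZMod p] V)).symm m ∈ T},
            add_mem' := ?_, zero_mem' := ?_, smul_mem' := ?_ }, ?_⟩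
  · intro x y hx hy
    show (Module.AEval'.of _).symm (x + y) ∈ T
    rw [map_add]
    exact hT.2.1 _ hx _ hy
  · show (Module.AEval'.of _).symm 0 ∈ T
    rw [map_zero]
    exact hT.1
  · intro q m hm
    show (Module.AEval'.of _).symm (q • m) ∈ T
    rw [Module.AEval.of_symm_smul]
    exact good_aeval_mem hT q _ hm
  · intro v
    show (Module.AEval'.of (f : V →ₗ[ZMod p] V)).symm (Module.AEval'.of _ v) ∈ T ↔ v ∈ T
    rw [LinearEquiv.symm_apply_apply]

lemma good_of_submodule (f : V ≃ₗ[ZMod p] V)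
    (W : Submodule (ZMod p)[X] (Module.AEval' (f : V →ₗ[ZMod p] V))) :
    Good f {v | Module.AEval'.of (f : V →ₗ[ZMod p] V) v ∈ W} := by
  have hfm : ∀ x ∈ {v | Module.AEval'.of (f : V →ₗ[ZMod p] V) v ∈ W},
      f x ∈ {v | Module.AEval'.of (f : V →ₗ[ZMod p] V) v ∈ W} := by
    intro x hx
    show Module.AEval'.of _ (f x) ∈ W
    have : Module.AEval'.of (f : V →ₗ[ZMod p] V) (f x)
        = (X : (ZMod p)[X]) • Module.AEval'.of (f : V →ₗ[ZMod p] V) x := by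
      rw [Module.AEval'.X_smul_of]
      rfl
    rw [this]
    exact W.smul_mem _ hx
  refine ⟨?_, ?_, ?_, hfm, symm_mem_of_mapsTo f hfm⟩
  · show Module.AEval'.of _ (0:V) ∈ W
    rw [map_zero]; exact W.zero_mem
  · intro x hx y hy
    show Module.AEval'.of _ (x + y) ∈ W
    rw [map_add]; exact W.add_mem hx hy
  · intro x hx
    show Module.AEval'.of _ (-x) ∈ W
    rw [map_neg]; exact W.neg_mem hx

lemma dvd_irred_sq {K : Type*} [Field K] {g d : K[X]} (hg : Irreducible g)
    (hd : d ∣ g ^ 2) : IsUnit d ∨ Associated d g ∨ Associated d (g ^ 2) := by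
  have hg0 : g ≠ 0 := hg.ne_zero
  by_cases hgd : g ∣ d
  · obtain ⟨d', rfl⟩ := hgd
    rw [sq] at hd
    have hd' : d' ∣ g := (mul_dvd_mul_iff_left hg0).mp hd
    by_cases hu : IsUnit d'
    · right; left
      exact associated_mul_unit_left g d' hu
    · right; right
      obtain ⟨c, hc⟩ := hd'
      rcases hg.isUnit_or_isUnit hc with h | h
      · exact absurd h hu
      · have h1 : Associated d' g := by
          rw [hc]
          exact (associated_mul_unit_left d' c h).symm
        have h2 : Associated (g * d') (g * g) := Associated.mul_left g h1
        rwa [← sq] at h2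
  · left
    by_contra hu
    have hd0 : d ≠ 0 := by
      intro h
      rw [h, zero_dvd_iff, sq] at hd
      exact hg0 (mul_self_eq_zero.mp hd)
    obtain ⟨q, hqi, hqd⟩ := WfDvdMonoid.exists_irreducible_factor hu hd0
    have hqg : q ∣ g := hqi.prime.dvd_of_dvd_pow (hqd.trans hd)
    exact hgd (((hqi.associated_of_dvd hg hqg).symm.dvd).trans hqd)

end S11

namespace S11

variable {p : ℕ} [Fact p.Prime] {V : Type*} [AddCommGroup V] [Module (ZMod p) V] [Finite V]

lemma mul_closure {I : Ideal (ZMod p)[X]} {c : Set ((ZMod p)[X] ⧸ I)}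
    (h0 : (0 : (ZMod p)[X] ⧸ I) ∈ c) (hadd : ∀ x ∈ c, ∀ y ∈ c, x + y ∈ c)
    (hX : ∀ y ∈ c, Ideal.Quotient.mk I X * y ∈ c) :
    ∀ q : (ZMod p)[X], ∀ y ∈ c, Ideal.Quotient.mk I q * y ∈ c := by
  have hns : ∀ n : ℕ, ∀ y ∈ c, n • y ∈ c := by
    intro n
    induction n with
    | zero => intro y _; simpa using h0
    | succ k ih =>
      intro y hy
      rw [succ_nsmul]
      exact hadd _ (ih y hy) _ hy
  intro q
  induction q using Polynomial.induction_on with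
  | C a =>
    intro y hy
    have h1 : (C a : (ZMod p)[X]) = ((a.val : ℕ) : (ZMod p)[X]) := by
      rw [← Polynomial.C_eq_natCast, ZMod.natCast_val, ZMod.cast_id]
    rw [h1, map_natCast, ← nsmul_eq_mul]
    exact hns _ y hy
  | add q r hq hr =>
    intro y hy
    rw [map_add, add_mul]
    exact hadd _ (hq y hy) _ (hr y hy)
  | monomial n a ih =>
    intro y hy
    have h1 : (C a * X ^ (n + 1) : (ZMod p)[X]) = X * (C a * X ^ n) := by ring
    rw [h1, map_mul, mul_assoc]
    exact hX _ (ih y hy)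

lemma module_char_rev (f : V ≃ₗ[ZMod p] V) (g : (ZMod p)[X]) (hg : Irreducible g)
    (e : V ≃+ ((ZMod p)[X] ⧸ Ideal.span {g ^ 2}))
    (he : ∀ v, e (f v) = Ideal.Quotient.mk (Ideal.span {g ^ 2}) Polynomial.X * e v) :
    ∃ N : Set V, Good f N ∧ N ≠ {0} ∧ N ≠ Set.univ ∧
      ∀ T : Set V, Good f T → T = {0} ∨ T = N ∨ T = Set.univ := by
  have hdeg : 0 < g.natDegree := hg.natDegree_pos
  have hgI : g ∉ (Ideal.span {g ^ 2}) := by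
    intro h
    rw [Ideal.mem_span_singleton] at h
    have := Polynomial.natDegree_le_of_dvd h hg.ne_zero
    rw [Polynomial.natDegree_pow] at this
    omega
  have hmkg : Ideal.Quotient.mk (Ideal.span {g ^ 2}) g ≠ 0 :=
    fun h => hgI (Ideal.Quotient.eq_zero_iff_mem.mp h)
  have hmkgnu : ¬ IsUnit (Ideal.Quotient.mk (Ideal.span {g ^ 2}) g) := by
    intro h
    obtain ⟨c, hc⟩ := isUnit_iff_exists_inv.mp h
    obtain ⟨q, rfl⟩ := Ideal.Quotient.mk_surjective c
    rw [← map_mul] at hc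
    have h1 : Ideal.Quotient.mk (Ideal.span {g ^ 2}) (g * q) = Ideal.Quotient.mk (Ideal.span {g ^ 2}) 1 := by rw [hc, map_one]
    have h2 : g * q - 1 ∈ (Ideal.span {g ^ 2}) := Ideal.Quotient.eq.mp h1
    rw [Ideal.mem_span_singleton] at h2
    obtain ⟨k, hk⟩ := h2
    have hone : g * (q - g * k) = 1 := by linear_combination hk
    exact hg.not_isUnit (IsUnit.of_mul_eq_one _ hone)
  let N : Set V := e ⁻¹' (Ideal.span {Ideal.Quotient.mk (Ideal.span {g ^ 2}) g} : Ideal ((ZMod p)[X] ⧸ (Ideal.span {g ^ 2})))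
  have hmemN : ∀ v, v ∈ N ↔ e v ∈ Ideal.span {Ideal.Quotient.mk (Ideal.span {g ^ 2}) g} := fun v => Iff.rfl
  have hgoodN : Good f N := by
    have hfm : ∀ x ∈ N, f x ∈ N := by
      intro x hx
      rw [hmemN, he x]
      exact Ideal.mul_mem_left _ _ hx
    refine ⟨?_, ?_, ?_, hfm, symm_mem_of_mapsTo f hfm⟩
    · rw [hmemN, map_zero]; exact Submodule.zero_mem _
    · intro x hx y hy
      rw [hmemN, map_add]; exact Submodule.add_mem _ hx hy
    · intro x hx
      rw [hmemN, map_neg]; exact Submodule.neg_mem _ hx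
  have hN0 : N ≠ {0} := by
    rw [good_ne_singleton_iff hgoodN.1]
    refine ⟨e.symm (Ideal.Quotient.mk (Ideal.span {g ^ 2}) g), ?_, ?_⟩
    · rw [hmemN, e.apply_symm_apply]
      exact Ideal.mem_span_singleton.mpr dvd_rfl
    · intro h
      apply hmkg
      rw [← e.apply_symm_apply (Ideal.Quotient.mk (Ideal.span {g ^ 2}) g), h, map_zero]
  have hNu : N ≠ Set.univ := by
    apply (Set.ne_univ_iff_exists_notMem N).mpr
    refine ⟨e.symm 1, ?_⟩
    intro h
    rw [hmemN, e.apply_symm_apply] at h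
    exact hmkgnu (isUnit_of_dvd_one (Ideal.mem_span_singleton.mp h))
  refine ⟨N, hgoodN, hN0, hNu, ?_⟩
  intro T hT
  have hc0 : (0 : (ZMod p)[X] ⧸ (Ideal.span {g ^ 2})) ∈ e '' T := ⟨0, hT.1, map_zero e⟩
  have hcadd : ∀ x ∈ e '' T, ∀ y ∈ e '' T, x + y ∈ e '' T := by
    rintro _ ⟨u, hu, rfl⟩ _ ⟨v, hv, rfl⟩
    exact ⟨u + v, hT.2.1 u hu v hv, map_add e u v⟩
  have hcX : ∀ y ∈ e '' T, Ideal.Quotient.mk (Ideal.span {g ^ 2}) X * y ∈ e '' T := by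
    rintro _ ⟨v, hv, rfl⟩
    exact ⟨f v, hT.2.2.2.1 v hv, he v⟩
  let J : Ideal ((ZMod p)[X] ⧸ (Ideal.span {g ^ 2})) :=
    { carrier := e '' T
      add_mem' := fun hx hy => hcadd _ hx _ hy
      zero_mem' := hc0
      smul_mem' := by
        intro q x hx
        rw [smul_eq_mul]
        obtain ⟨r, rfl⟩ := Ideal.Quotient.mk_surjective q
        exact mul_closure hc0 hcadd hcX r x hx }
  have hJcar : ∀ z, z ∈ J ↔ z ∈ e '' T := fun z => Iff.rfl
  have hmemJ : ∀ v, e v ∈ J ↔ v ∈ T := by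
    intro v
    rw [hJcar]
    constructor
    · rintro ⟨w, hw, hew⟩
      rwa [← e.injective hew]
    · intro hv
      exact ⟨v, hv, rfl⟩
  let J' : Ideal (ZMod p)[X] := Ideal.comap (Ideal.Quotient.mk (Ideal.span {g ^ 2})) J
  obtain ⟨d, hd⟩ := Submodule.IsPrincipal.principal J'
  have hg2J' : g ^ 2 ∈ J' := by
    show Ideal.Quotient.mk (Ideal.span {g ^ 2}) (g ^ 2) ∈ J
    rw [Ideal.Quotient.eq_zero_iff_mem.mpr (Ideal.mem_span_singleton.mpr dvd_rfl)]
    exact J.zero_mem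
  have hdvd : d ∣ g ^ 2 := by
    rw [hd] at hg2J'
    exact Ideal.mem_span_singleton.mp hg2J'
  have hJmap : J = Ideal.map (Ideal.Quotient.mk (Ideal.span {g ^ 2})) J' :=
    (Ideal.map_comap_of_surjective _ Ideal.Quotient.mk_surjective J).symm
  rcases dvd_irred_sq hg hdvd with h | h | h
  · right; right
    have hJ'top : J' = ⊤ := by
      rw [hd]
      exact Ideal.span_singleton_eq_top.mpr h
    have hJtop : J = ⊤ := by rw [hJmap, hJ'top, Ideal.map_top]
    apply Set.eq_univ_of_forall
    intro v
    exact (hmemJ v).mp (by rw [hJtop]; trivial)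
  · right; left
    have hJ' : J' = Ideal.span {g} := by
      rw [hd]
      exact Ideal.span_singleton_eq_span_singleton.mpr h
    have hJ : J = Ideal.span {Ideal.Quotient.mk (Ideal.span {g ^ 2}) g} := by
      rw [hJmap, hJ', Ideal.map_span, Set.image_singleton]
    ext v
    rw [← hmemJ v, hJ]
    exact (hmemN v).symm
  · left
    have hJ' : J' = Ideal.span {g ^ 2} := by
      rw [hd]
      exact Ideal.span_singleton_eq_span_singleton.mpr h
    have hJ : J = ⊥ := by rw [hJmap, hJ']; exact Ideal.map_quotient_self _
    ext v
    rw [Set.mem_singleton_iff, ← hmemJ v, hJ, Ideal.mem_bot, AddEquiv.map_eq_zero_iff]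

end S11

namespace S11

variable {p : ℕ} [Fact p.Prime] {V : Type*} [AddCommGroup V] [Module (ZMod p) V] [Finite V]

lemma module_char_fwd (f : V ≃ₗ[ZMod p] V)
    (N : Set V) (hN : Good f N) (hN0 : N ≠ {0}) (hNu : N ≠ Set.univ)
    (hclass : ∀ T : Set V, Good f T → T = {0} ∨ T = N ∨ T = Set.univ) :
    ∃ g : Polynomial (ZMod p), Irreducible g ∧
      ∃ e : V ≃+ ((ZMod p)[X] ⧸ Ideal.span {g ^ 2}),
        ∀ v, e (f v) = Ideal.Quotient.mk (Ideal.span {g ^ 2}) Polynomial.X * e v := by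
  obtain ⟨x, hx⟩ := (Set.ne_univ_iff_exists_notMem N).mp hNu
  have hx0 : x ≠ 0 := fun h => hx (h ▸ hN.1)
  obtain ⟨v₁, hv₁, hv₁0⟩ := (good_ne_singleton_iff hN.1).mp hN0
  let F : V →ₗ[ZMod p] V := (f : V →ₗ[ZMod p] V)
  let xh : Module.AEval' F := Module.AEval'.of F x
  let φ : (ZMod p)[X] →ₗ[(ZMod p)[X]] Module.AEval' F :=
    LinearMap.toSpanSingleton _ _ xh
  have hφ_apply : ∀ r : (ZMod p)[X], φ r = r • xh := fun r => rfl
  -- surjectivity of φ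
  have hGx : Good f {v | Module.AEval'.of F v ∈ Submodule.span (ZMod p)[X] {xh}} :=
    good_of_submodule f _
  have hGx_univ : {v | Module.AEval'.of F v ∈ Submodule.span (ZMod p)[X] {xh}} = Set.univ := by
    have hxmem : x ∈ {v | Module.AEval'.of F v ∈ Submodule.span (ZMod p)[X] {xh}} :=
      Submodule.mem_span_singleton_self xh
    rcases hclass _ hGx with h | h | h
    · exfalso
      rw [h] at hxmem
      exact hx0 hxmem
    · exfalso
      rw [h] at hxmem
      exact hx hxmem
    · exact h
  have hsurj : Function.Surjective φ := by
    intro m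
    have hm : (Module.AEval'.of F).symm m ∈
        {v | Module.AEval'.of F v ∈ Submodule.span (ZMod p)[X] {xh}} := by
      rw [hGx_univ]; trivial
    have hm2 : m ∈ Submodule.span (ZMod p)[X] {xh} := by
      have := hm
      rwa [Set.mem_setOf_eq, LinearEquiv.apply_symm_apply] at this
    rw [LinearMap.span_singleton_eq_range] at hm2
    exact hm2
  -- the middle ideal
  obtain ⟨NW, hNW⟩ := submodule_of_good hN
  let JN : Ideal (ZMod p)[X] := Submodule.comap φ NW
  have hIleJN : LinearMap.ker φ ≤ JN := by
    intro q hq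
    show φ q ∈ NW
    rw [LinearMap.mem_ker.mp hq]
    exact NW.zero_mem
  have hJNneI : JN ≠ LinearMap.ker φ := by
    obtain ⟨q, hq⟩ := hsurj (Module.AEval'.of F v₁)
    intro heq
    have hqJN : q ∈ JN := by
      show φ q ∈ NW
      rw [hq]
      exact (hNW v₁).mpr hv₁
    rw [heq] at hqJN
    have : φ q = 0 := LinearMap.mem_ker.mp hqJN
    rw [hq] at this
    exact hv₁0 ((Module.AEval'.of F).map_eq_zero_iff.mp this)
  have hJNtop : JN ≠ ⊤ := by
    intro heq
    have h1 : (1 : (ZMod p)[X]) ∈ JN := heq ▸ trivial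
    have h2 : φ 1 ∈ NW := h1
    rw [hφ_apply, one_smul] at h2
    exact hx ((hNW x).mp h2)
  have hkerJN : LinearMap.ker φ < JN := lt_of_le_of_ne hIleJN (Ne.symm hJNneI)
  have hJNlt : JN < ⊤ := lt_top_iff_ne_top.mpr hJNtop
  -- uniqueness of the middle ideal
  have huniq : ∀ J : Ideal (ZMod p)[X], LinearMap.ker φ < J → J < ⊤ → J = JN := by
    intro J hltker hlttop
    have hGJ : Good f {v | Module.AEval'.of F v ∈ Submodule.map φ J} :=
      good_of_submodule f _
    have hGJne : {v | Module.AEval'.of F v ∈ Submodule.map φ J} ≠ {0} := by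
      obtain ⟨q, hqJ, hqk⟩ := SetLike.exists_of_lt hltker
      have hφq : φ q ≠ 0 := by
        intro h
        exact hqk (LinearMap.mem_ker.mpr h)
      rw [good_ne_singleton_iff hGJ.1]
      refine ⟨(Module.AEval'.of F).symm (φ q), ?_, ?_⟩
      · show Module.AEval'.of F ((Module.AEval'.of F).symm (φ q)) ∈ Submodule.map φ J
        rw [LinearEquiv.apply_symm_apply]
        exact ⟨q, hqJ, rfl⟩
      · intro h
        apply hφq
        rw [← LinearEquiv.apply_symm_apply (Module.AEval'.of F) (φ q), h, map_zero]
    have hGJnu : {v | Module.AEval'.of F v ∈ Submodule.map φ J} ≠ Set.univ := by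
      intro heq
      have hxmem : x ∈ {v | Module.AEval'.of F v ∈ Submodule.map φ J} := by
        rw [heq]; trivial
      obtain ⟨q, hqJ, hq⟩ := hxmem
      have hq1 : q - 1 ∈ LinearMap.ker φ := by
        rw [LinearMap.mem_ker, map_sub, hq]
        show xh - φ 1 = 0
        rw [hφ_apply, one_smul, sub_self]
      have h1J : (1 : (ZMod p)[X]) ∈ J := by
        have := J.sub_mem hqJ (hltker.le hq1)
        rwa [sub_sub_cancel] at this
      exact hlttop.ne (Ideal.eq_top_iff_one J |>.mpr h1J)
    have hGJN : {v | Module.AEval'.of F v ∈ Submodule.map φ J} = N := by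
      rcases hclass _ hGJ with h | h | h
      · exact absurd h hGJne
      · exact h
      · exact absurd h hGJnu
    have hNWmap : NW = Submodule.map φ J := by
      ext m
      have h1 := hNW ((Module.AEval'.of F).symm m)
      rw [LinearEquiv.apply_symm_apply] at h1
      have h2 : (Module.AEval'.of F).symm m ∈
          {v | Module.AEval'.of F v ∈ Submodule.map φ J} ↔ m ∈ Submodule.map φ J := by
        rw [Set.mem_setOf_eq, LinearEquiv.apply_symm_apply]
      rw [h1, ← hGJN, h2]
    show J = Submodule.comap φ NW
    rw [hNWmap, Submodule.comap_map_eq, sup_eq_left.mpr hltker.le]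
  -- the kernel is principal
  obtain ⟨h, hI⟩ := Submodule.IsPrincipal.principal (LinearMap.ker φ)
  have hIspan : LinearMap.ker φ = Ideal.span {h} := hI
  -- h ≠ 0
  have hne0 : h ≠ 0 := by
    intro h0
    have hker_bot : LinearMap.ker φ = ⊥ := by
      rw [hIspan, h0, Ideal.span_singleton_eq_bot.mpr rfl]
    have hmid1 : Ideal.span {(X : (ZMod p)[X])} = JN := by
      apply huniq
      · rw [hker_bot]
        exact bot_lt_iff_ne_bot.mpr (fun hb =>
          Polynomial.X_ne_zero (Ideal.span_singleton_eq_bot.mp hb))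
      · exact lt_top_iff_ne_top.mpr
          (fun ht => Polynomial.not_isUnit_X (Ideal.span_singleton_eq_top.mp ht))
    have hmid2 : Ideal.span {(X ^ 2 : (ZMod p)[X])} = JN := by
      apply huniq
      · rw [hker_bot]
        refine bot_lt_iff_ne_bot.mpr (fun hb => ?_)
        exact pow_ne_zero 2 Polynomial.X_ne_zero (Ideal.span_singleton_eq_bot.mp hb)
      · refine lt_top_iff_ne_top.mpr (fun ht => ?_)
        have := Ideal.span_singleton_eq_top.mp ht
        rw [sq] at this
        exact Polynomial.not_isUnit_X (isUnit_of_mul_isUnit_left this)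
    have hassoc : Associated (X : (ZMod p)[X]) (X ^ 2) :=
      Ideal.span_singleton_eq_span_singleton.mp (hmid1.trans hmid2.symm)
    have hdvd : (X ^ 2 : (ZMod p)[X]) ∣ X := hassoc.symm.dvd
    have := Polynomial.natDegree_le_of_dvd hdvd Polynomial.X_ne_zero
    rw [Polynomial.natDegree_X_pow, Polynomial.natDegree_X] at this
    omega
  have hIneTop : LinearMap.ker φ ≠ ⊤ := ne_top_of_lt hkerJN
  have hntu : ¬ IsUnit h := by
    intro hu
    exact hIneTop (by rw [hIspan]; exact Ideal.span_singleton_eq_top.mpr hu)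
  -- middle ideals from factorizations
  have hmid : ∀ a b : (ZMod p)[X], h = a * b → ¬IsUnit a → ¬IsUnit b →
      Ideal.span {a} = JN := by
    intro a b hab hua hub
    apply huniq
    · refine lt_of_le_of_ne ?_ ?_
      · rw [hIspan]
        exact Ideal.span_singleton_le_span_singleton.mpr ⟨b, hab⟩
      · intro heq
        have heq2 : Ideal.span {h} = Ideal.span {a} := by rw [← hIspan, heq]
        obtain ⟨u, hu⟩ := Ideal.span_singleton_eq_span_singleton.mp heq2
        have : h * (↑u * b) = h * 1 := by
          rw [mul_one, ← mul_assoc, hu, ← hab]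
        have h1 : (↑u * b : (ZMod p)[X]) = 1 := mul_left_cancel₀ hne0 this
        exact hub (IsUnit.of_mul_eq_one _ (by rw [mul_comm] at h1; exact h1))
    · exact lt_top_iff_ne_top.mpr
        (fun ht => hua (Ideal.span_singleton_eq_top.mp ht))
  -- h is not irreducible
  have hnirr : ¬ Irreducible h := by
    intro hirr
    obtain ⟨m, hm⟩ := Submodule.IsPrincipal.principal JN
    have hmdvd : m ∣ h := by
      have : h ∈ JN := hIleJN (hIspan ▸ Ideal.mem_span_singleton.mpr dvd_rfl)
      rw [hm] at this
      exact Ideal.mem_span_singleton.mp this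
    obtain ⟨c, hc⟩ := hmdvd
    rcases hirr.isUnit_or_isUnit hc with hum | huc
    · exact hJNtop (by rw [hm]; exact Ideal.span_singleton_eq_top.mpr hum)
    · apply hJNneI
      rw [hm, hIspan]
      apply Ideal.span_singleton_eq_span_singleton.mpr
      rw [hc]
      exact (associated_mul_unit_left m c huc).symm
  -- factor h
  rw [irreducible_iff] at hnirr
  push_neg at hnirr
  obtain ⟨a, b, hab, hua, hub⟩ := hnirr hntu
  have ha0 : a ≠ 0 := by
    intro h0
    exact hne0 (by rw [hab, h0, zero_mul])
  -- a is irreducible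
  have ha_irr : Irreducible a := by
    refine ⟨hua, ?_⟩
    intro c d hcd
    by_contra hcon
    push_neg at hcon
    obtain ⟨hc, hd⟩ := hcon
    have hcmid : Ideal.span {c} = JN := by
      apply hmid c (d * b)
      · rw [hab, hcd]; ring
      · exact hc
      · intro hu
        exact hd (isUnit_of_mul_isUnit_left hu)
    have hamid : Ideal.span {a} = JN := hmid a b hab hua hub
    obtain ⟨u, hu⟩ := Ideal.span_singleton_eq_span_singleton.mp (hcmid.trans hamid.symm)
    have hc0 : c ≠ 0 := by
      intro h0
      exact ha0 (by rw [hcd, h0, zero_mul])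
    have : c * d = c * ↑u := by rw [← hcd, hu]
    have hdu : d = ↑u := mul_left_cancel₀ hc0 this
    exact hd (hdu ▸ u.isUnit)
  -- h is associated to a^2
  have hbmid : Ideal.span {b} = JN := hmid b a (by rw [hab]; ring) hub hua
  obtain ⟨u, hbu⟩ := Ideal.span_singleton_eq_span_singleton.mp
    (hbmid.trans ((hmid a b hab hua hub).symm))
  -- hbu : b * u = a
  have hbval : a * ↑u⁻¹ = b := by
    rw [← hbu, Units.mul_inv_cancel_right]
  have hassoc : Associated (a ^ 2) h := by
    refine ⟨u⁻¹, ?_⟩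
    calc a ^ 2 * ↑u⁻¹ = a * (a * ↑u⁻¹) := by ring
    _ = a * b := by rw [hbval]
    _ = h := hab.symm
  have hkerEq : LinearMap.ker φ = Ideal.span {a ^ 2} := by
    rw [hIspan]
    exact (Ideal.span_singleton_eq_span_singleton.mpr hassoc).symm
  -- build the additive equivalence
  let ψ := φ.quotKerEquivOfSurjective hsurj
  let Φ := Ideal.quotEquivOfEq hkerEq
  refine ⟨a, ha_irr, ⟨(Module.AEval'.of F).toAddEquiv.trans
    (ψ.symm.toAddEquiv.trans Φ.toAddEquiv), ?_⟩⟩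
  intro v
  have h1 : Module.AEval'.of F (f v) = (X : (ZMod p)[X]) • Module.AEval'.of F v := by
    rw [Module.AEval'.X_smul_of]
    rfl
  have h3 : ∀ z : (ZMod p)[X] ⧸ LinearMap.ker φ,
      (X : (ZMod p)[X]) • z = Ideal.Quotient.mk (LinearMap.ker φ) X * z := by
    intro z
    obtain ⟨q, rfl⟩ := Ideal.Quotient.mk_surjective z
    rw [← map_mul, ← Ideal.Quotient.mk_eq_mk, ← Ideal.Quotient.mk_eq_mk,
      ← Submodule.Quotient.mk_smul, smul_eq_mul]
  have h4 : ∀ z, Φ (Ideal.Quotient.mk (LinearMap.ker φ) X * z)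
      = Ideal.Quotient.mk (Ideal.span {a ^ 2}) X * Φ z := by
    intro z
    obtain ⟨q, rfl⟩ := Ideal.Quotient.mk_surjective z
    rw [← map_mul, Ideal.quotEquivOfEq_mk, Ideal.quotEquivOfEq_mk, map_mul]
  show Φ (ψ.symm (Module.AEval'.of F (f v))) = _ * Φ (ψ.symm (Module.AEval'.of F v))
  rw [h1, map_smul, h3, h4]

end S11

namespace S11

variable {p : ℕ} [Fact p.Prime] {V : Type*} [AddCommGroup V] [Module (ZMod p) V] [Finite V]

lemma connected_aq (f : V ≃ₗ[ZMod p] V)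
    (hf : Function.Bijective (fun x : V => x - f x)) : (aq f).Connected := by
  intro x y
  obtain ⟨c, hc⟩ := hf.2 (y - x)
  have hc' : c - f c = y - x := hc
  refine ⟨(aq f).L c * ((aq f).L 0)⁻¹, ?_, ?_⟩
  · exact Subgroup.subset_closure ⟨c, 0, rfl⟩
  · rw [Equiv.Perm.mul_apply]
    have h0 : ((aq f).L 0)⁻¹ x = (aq f).ldiv 0 x := rfl
    rw [h0, (aq f).L_apply, ldiv_eq, act_eq, sub_zero, add_zero, f.apply_symm_apply,
      hc', sub_add_cancel]

lemma even_of_equiv {n : ℕ} (g : (ZMod p)[X]) (hg : Irreducible g)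
    (e : (Fin n → ZMod p) ≃+ ((ZMod p)[X] ⧸ Ideal.span {g ^ 2})) : Even n := by
  have hg2 : g ^ 2 ≠ 0 := pow_ne_zero _ hg.ne_zero
  let el : (Fin n → ZMod p) ≃ₗ[ZMod p] ((ZMod p)[X] ⧸ Ideal.span {g ^ 2}) :=
    { e with
      map_smul' := by
        intro c v
        have h1 : c • v = c.val • v := by
          rw [← Nat.cast_smul_eq_nsmul (ZMod p), ZMod.natCast_val, ZMod.cast_id]
        have h2 : c • e v = c.val • e v := by
          rw [← Nat.cast_smul_eq_nsmul (ZMod p), ZMod.natCast_val, ZMod.cast_id]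
        show e (c • v) = c • e v
        rw [h1, h2, map_nsmul] }
  have h1 : Module.finrank (ZMod p) (Fin n → ZMod p) = n := Module.finrank_fin_fun _
  have h2 : Module.finrank (ZMod p) ((ZMod p)[X] ⧸ Ideal.span {g ^ 2})
      = (g ^ 2).natDegree := by
    have := (AdjoinRoot.powerBasis hg2).finrank
    rw [AdjoinRoot.powerBasis_dim] at this
    exact this
  have h3 := el.finrank_eq
  rw [h1, h2, Polynomial.natDegree_pow] at h3
  exact ⟨g.natDegree, by omega⟩

end S11


/-- For a prime `p`, `n ≥ 1` and `f ∈ GL_n(Z_p)` with `1 − f`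
invertible, `Q = Aff(Z_p^n, f)` is a connected quandle, and `Q` is non-simple,
subdirectly irreducible and LSS iff the `Z_p[t]`-module given by `f` is
isomorphic to `Z_p[t]/(g²)` with `g` irreducible; in this case `n` is even. -/
theorem statement11 {p : ℕ} (hp : p.Prime) {n : ℕ} (hn : 1 ≤ n)
    (f : (Fin n → ZMod p) ≃ₗ[ZMod p] (Fin n → ZMod p))
    (hf : Function.Bijective (fun x : Fin n → ZMod p => x - f x)) :
    (affineQuandle (Fin n → ZMod p) f.toAddEquiv).Connected ∧
    ((¬ (affineQuandle (Fin n → ZMod p) f.toAddEquiv).Simple ∧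
      (affineQuandle (Fin n → ZMod p) f.toAddEquiv).SubdirectlyIrreducible ∧
      (affineQuandle (Fin n → ZMod p) f.toAddEquiv).LSS) ↔
      (∃ g : Polynomial (ZMod p), Irreducible g ∧
        ∃ e : (Fin n → ZMod p) ≃+ (Polynomial (ZMod p) ⧸ Ideal.span {g ^ 2}),
          ∀ v, e (f v) =
            Ideal.Quotient.mk (Ideal.span {g ^ 2}) Polynomial.X * e v)) ∧
    ((¬ (affineQuandle (Fin n → ZMod p) f.toAddEquiv).Simple ∧
      (affineQuandle (Fin n → ZMod p) f.toAddEquiv).SubdirectlyIrreducible ∧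
      (affineQuandle (Fin n → ZMod p) f.toAddEquiv).LSS) → Even n) := by
  haveI := Fact.mk hp
  refine ⟨S11.connected_aq f hf, ?_, ?_⟩
  · constructor
    · intro h
      obtain ⟨N, hN, h0, hu, hc⟩ := (S11.bridge f hf).mp h
      exact S11.module_char_fwd f N hN h0 hu hc
    · rintro ⟨g, hg, e, he⟩
      exact (S11.bridge f hf).mpr (S11.module_char_rev f g hg e he)
  · intro h
    obtain ⟨N, hN, h0, hu, hc⟩ := (S11.bridge f hf).mp h
    obtain ⟨g, hg, e, he⟩ := S11.module_char_fwd f N hN h0 hu hc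
    exact S11.even_of_equiv g hg e
end
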